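/- Fix h > 0 and a real number x_{i+1/2}, and for each integer ℓ let I_ℓ = [x_{i+1/2} + (ℓ − i − 1)h, x_{i+1/2} + (ℓ − i)h] denote the cell of width h with center x_ℓ = x_{i+1/2} + (ℓ − i − 1/2)h. Let p be a real polynomial of degree at most 5 satisfying (1/h)·∫_{I_ℓ} p(x) dx = ū_ℓ and (1/h)·∫_{I_ℓ} p(x)·(x − x_ℓ)/h dx = v̄_ℓ for each ℓ ∈ {i−1, i, i+1}. Then its value and derivative at the right endpoint x_{i+1/2} of the middle cell I_i are p(x_{i+1/2}) = (13/108)ū_{i−1} + (7/12)ū_i + (8/27)ū_{i+1} + (25/54)v̄_{i−1} + (241/54)v̄_i − (28/27)v̄_{i+1} and p′(x_{i+1/2}) = (1/h)·[(5/36)ū_{i−1} − (9/4)ū_i + (19/9)ū_{i+1} + (11/18)v̄_{i−1} − (97/18)v̄_i − (62/9)v̄_{i+1}]. -/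

import Mathlib

open MeasureTheory

/-- Left endpoint of the cell `I_ℓ = [x_{i+1/2} + (ℓ-i-1)h, x_{i+1/2} + (ℓ-i)h]`. -/
noncomputable def cellLeft (xhalf h : ℝ) (i ℓ : ℤ) : ℝ :=
  xhalf + ((ℓ : ℝ) - (i : ℝ) - 1) * h

/-- Right endpoint of the cell `I_ℓ`. -/
noncomputable def cellRight (xhalf h : ℝ) (i ℓ : ℤ) : ℝ :=
  xhalf + ((ℓ : ℝ) - (i : ℝ)) * h

/-- Center `x_ℓ = x_{i+1/2} + (ℓ-i-1/2)h` of the cell `I_ℓ`. -/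
noncomputable def cellCenter (xhalf h : ℝ) (i ℓ : ℤ) : ℝ :=
  xhalf + ((ℓ : ℝ) - (i : ℝ) - 1 / 2) * h

/-- The polynomial `p` matches the zeroth-order moment `ū_ℓ` and the first-order moment
`v̄_ℓ` on every cell `I_ℓ` with `ℓ ∈ S`. -/
def MatchesMoments (xhalf h : ℝ) (i : ℤ) (S : Set ℤ) (ub vb : ℤ → ℝ)
    (p : Polynomial ℝ) : Prop :=
  ∀ ℓ ∈ S,
    (1 / h) * (∫ x in cellLeft xhalf h i ℓ..cellRight xhalf h i ℓ, p.eval x) = ub ℓ ∧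
    (1 / h) * (∫ x in cellLeft xhalf h i ℓ..cellRight xhalf h i ℓ,
        p.eval x * ((x - cellCenter xhalf h i ℓ) / h)) = vb ℓ

lemma integral_poly_aux (q : Polynomial ℝ) (n : ℕ) (hq : q.natDegree < n) (a b : ℝ) :
    ∫ x in a..b, q.eval x
      = ∑ k ∈ Finset.range n, q.coeff k * ((b ^ (k + 1) - a ^ (k + 1)) / (k + 1)) := by
  have he : ∀ x : ℝ, q.eval x = ∑ k ∈ Finset.range n, q.coeff k * x ^ k :=
    fun x => q.eval_eq_sum_range' hq x
  simp_rw [he]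
  rw [intervalIntegral.integral_finset_sum (f := fun k x => q.coeff k * x ^ k)
    (fun k _ => ((continuous_const.mul (continuous_pow k)).intervalIntegrable a b))]
  refine Finset.sum_congr rfl fun k _ => ?_
  rw [intervalIntegral.integral_const_mul, integral_pow]

lemma integral_poly_mul_aux (q : Polynomial ℝ) (n : ℕ) (hq : q.natDegree < n) (a b c : ℝ) :
    ∫ x in a..b, q.eval x * (x - c)
      = ∑ k ∈ Finset.range n, q.coeff k *
          ((b ^ (k + 2) - a ^ (k + 2)) / (k + 2) - c * ((b ^ (k + 1) - a ^ (k + 1)) / (k + 1))) := by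
  have he : ∀ x : ℝ, q.eval x * (x - c)
      = ∑ k ∈ Finset.range n, q.coeff k * (x ^ (k + 1) - c * x ^ k) := by
    intro x
    rw [q.eval_eq_sum_range' hq x, Finset.sum_mul]
    refine Finset.sum_congr rfl fun k _ => ?_
    ring
  simp_rw [he]
  rw [intervalIntegral.integral_finset_sum (f := fun k x => q.coeff k * (x ^ (k + 1) - c * x ^ k)) (fun k _ =>
    ((continuous_const.mul ((continuous_pow (k+1)).sub
      (continuous_const.mul (continuous_pow k)))).intervalIntegrable a b))]
  refine Finset.sum_congr rfl fun k _ => ?_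
  rw [intervalIntegral.integral_const_mul, intervalIntegral.integral_sub (g := fun x => c * x ^ k)
      ((continuous_pow (k+1)).intervalIntegrable a b)
      ((continuous_const.mul (continuous_pow k)).intervalIntegrable a b),
    intervalIntegral.integral_const_mul, integral_pow, integral_pow]
  push_cast
  ring

set_option maxHeartbeats 4000000 in
/-- **Interface traces of the sixth-order Hermite reconstruction** (proof of Theorem 2.1).
If `p` is a polynomial of degree at most 5 matching the zeroth- and first-order moments
on the stencil `{I_{i-1}, I_i, I_{i+1}}`, then its value and derivative at the right
endpoint `x_{i+1/2}` of the middle cell `I_i` are the stated explicit linear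
combinations of the moments. -/
theorem hermite_reconstruction_right_trace
    (xhalf h : ℝ) (hh : 0 < h) (i : ℤ) (ub vb : ℤ → ℝ) (p : Polynomial ℝ)
    (hdeg : p.degree ≤ 5)
    (hmom : MatchesMoments xhalf h i ({i - 1, i, i + 1} : Set ℤ) ub vb p) :
    p.eval xhalf =
      (13 / 108) * ub (i - 1) + (7 / 12) * ub i + (8 / 27) * ub (i + 1)
        + (25 / 54) * vb (i - 1) + (241 / 54) * vb i - (28 / 27) * vb (i + 1) ∧
    p.derivative.eval xhalf =
      (1 / h) * ((5 / 36) * ub (i - 1) - (9 / 4) * ub i + (19 / 9) * ub (i + 1)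
        + (11 / 18) * vb (i - 1) - (97 / 18) * vb i - (62 / 9) * vb (i + 1)) := by
  have hne : h ≠ 0 := ne_of_gt hh
  have hnd : p.natDegree < 6 :=
    lt_of_le_of_lt (Polynomial.natDegree_le_iff_degree_le.2 hdeg) (by norm_num)
  have h1 := hmom (i - 1) (by simp)
  have h2 := hmom i (by simp)
  have h3 := hmom (i + 1) (by simp)
  -- endpoints and centers
  have hL1 : cellLeft xhalf h i (i - 1) = xhalf + (-2) * h := by
    unfold cellLeft; push_cast; ring
  have hR1 : cellRight xhalf h i (i - 1) = xhalf + (-1) * h := by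
    unfold cellRight; push_cast; ring
  have hC1 : cellCenter xhalf h i (i - 1) = xhalf + (-(3/2)) * h := by
    unfold cellCenter; push_cast; ring
  have hL2 : cellLeft xhalf h i i = xhalf + (-1) * h := by
    unfold cellLeft; push_cast; ring
  have hR2 : cellRight xhalf h i i = xhalf + 0 * h := by
    unfold cellRight; push_cast; ring
  have hC2 : cellCenter xhalf h i i = xhalf + (-(1/2)) * h := by
    unfold cellCenter; push_cast; ring
  have hL3 : cellLeft xhalf h i (i + 1) = xhalf + 0 * h := by
    unfold cellLeft; push_cast; ring
  have hR3 : cellRight xhalf h i (i + 1) = xhalf + 1 * h := by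
    unfold cellRight; push_cast; ring
  have hC3 : cellCenter xhalf h i (i + 1) = xhalf + (1/2) * h := by
    unfold cellCenter; push_cast; ring
  have hmul : ∀ L R cc : ℝ,
      (∫ x in L..R, p.eval x * ((x - cc) / h))
        = (1 / h) * ∑ k ∈ Finset.range 6, p.coeff k *
            ((R ^ (k + 2) - L ^ (k + 2)) / (k + 2)
              - cc * ((R ^ (k + 1) - L ^ (k + 1)) / (k + 1))) := by
    intro L R cc
    have he : ∀ x : ℝ, p.eval x * ((x - cc) / h) = p.eval x * (x - cc) * (1 / h) :=
      fun x => by ring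
    simp_rw [he]
    rw [intervalIntegral.integral_mul_const, integral_poly_mul_aux p 6 hnd, mul_comm]
  -- explicit moment equations
  have EU1 := h1.1; have EV1 := h1.2
  have EU2 := h2.1; have EV2 := h2.2
  have EU3 := h3.1; have EV3 := h3.2
  rw [hL1, hR1, integral_poly_aux p 6 hnd] at EU1
  rw [hL1, hR1, hC1, hmul] at EV1
  rw [hL2, hR2, integral_poly_aux p 6 hnd] at EU2
  rw [hL2, hR2, hC2, hmul] at EV2
  rw [hL3, hR3, integral_poly_aux p 6 hnd] at EU3
  rw [hL3, hR3, hC3, hmul] at EV3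
  simp only [Finset.sum_range_succ, Finset.sum_range_zero] at EU1 EV1 EU2 EV2 EU3 EV3
  have hev : p.eval xhalf = ∑ k ∈ Finset.range 6, p.coeff k * xhalf ^ k :=
    p.eval_eq_sum_range' hnd xhalf
  have hndd : p.derivative.natDegree < 6 :=
    lt_of_le_of_lt (Polynomial.natDegree_derivative_le p) (by omega)
  have hdev : p.derivative.eval xhalf
      = ∑ k ∈ Finset.range 6, p.derivative.coeff k * xhalf ^ k :=
    p.derivative.eval_eq_sum_range' hndd xhalf
  have hc6 : p.coeff 6 = 0 := Polynomial.coeff_eq_zero_of_natDegree_lt hnd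
  simp only [Finset.sum_range_succ, Finset.sum_range_zero, Polynomial.coeff_derivative]
    at hev hdev
  rw [show (5:ℕ) + 1 = 6 from rfl, hc6] at hdev
  push_cast at EU1 EV1 EU2 EV2 EU3 EV3 hdev
  constructor
  · rw [hev, ← EU1, ← EU2, ← EU3, ← EV1, ← EV2, ← EV3]
    field_simp
    ring
  · rw [hdev, ← EU1, ← EU2, ← EU3, ← EV1, ← EV2, ← EV3]
    field_simp
    ring
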